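/- arXiv:1312.3527 — 3 statements merged into one kernel-verified Lean document; each statement's English description precedes it below -/
import Mathlib

section
/- Let U ⊆ ℝⁿ be open, let X¹, X² be vector fields on U, let Δ = span_{C^∞(U)}{X¹, X²}, and let (F_k) be the Lie flag of Δ. Set P₀ = {X¹, X²} and, for k ∈ ℕ, P_{k+1} = { [Y^{k+2}, [Y^{k+1}, [⋯, [Y², Y¹]⋯]]] : Y¹, …, Y^{k+2} ∈ P₀ } (iterated left-nested brackets of elements of P₀). Then F₀ = Δ and, for every k ∈ ℕ, F_{k+1} = span_{C^∞(U)}(⋃_{j=0}^{k+1} P_j) = F_k + span_{C^∞(U)}(P_{k+1}). -/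
set_option maxHeartbeats 1000000
set_option synthInstance.maxHeartbeats 1000000


noncomputable section

/-- A vector field on (an open subset of) `ℝⁿ`, represented as a total map. -/
abbrev VF (n : ℕ) := (Fin n → ℝ) → (Fin n → ℝ)

/-- Lie bracket `[X,Y](x) = DY(x)(X(x)) − DX(x)(Y(x))`. -/
def lieBracket {n : ℕ} (X Y : VF n) : VF n :=
  fun x => fderiv ℝ Y x (X x) - fderiv ℝ X x (Y x)

/-- Span over `C^∞(U)` of a set of vector fields (membership only constrains values on `U`). -/
def spanOn {n : ℕ} (U : Set (Fin n → ℝ)) (S : Set (VF n)) : Set (VF n) :=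
  { X | ∃ (m : ℕ) (c : Fin m → (Fin n → ℝ) → ℝ) (Y : Fin m → VF n),
      (∀ i, ContDiffOn ℝ (⊤ : ℕ∞) (c i) U) ∧ (∀ i, Y i ∈ S) ∧
      ∀ x ∈ U, X x = ∑ i, c i x • Y i x }

/-- Sum of two distributions (as equality of values on `U`). -/
def addOn {n : ℕ} (U : Set (Fin n → ℝ)) (A B : Set (VF n)) : Set (VF n) :=
  { X | ∃ Y ∈ A, ∃ Z ∈ B, ∀ x ∈ U, X x = Y x + Z x }

/-- The set of brackets `[X,Y]`, `X ∈ A`, `Y ∈ B`. -/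
def bracketSet {n : ℕ} (A B : Set (VF n)) : Set (VF n) :=
  { Z | ∃ X ∈ A, ∃ Y ∈ B, Z = lieBracket X Y }

/-- The Lie flag: `F₀ = Δ`, `F_{k+1} = F_k + span_{C^∞(U)}{[X,Y] : X ∈ F_k, Y ∈ F₀}`. -/
def lieFlag {n : ℕ} (U : Set (Fin n → ℝ)) (Δ : Set (VF n)) : ℕ → Set (VF n)
  | 0 => Δ
  | k + 1 => addOn U (lieFlag U Δ k) (spanOn U (bracketSet (lieFlag U Δ k) Δ))

/-- The derived flag: `G₀ = Δ`, `G_{k+1} = G_k + span_{C^∞(U)}{[X,Y] : X, Y ∈ G_k}`. -/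
def derivedFlag {n : ℕ} (U : Set (Fin n → ℝ)) (Δ : Set (VF n)) : ℕ → Set (VF n)
  | 0 => Δ
  | k + 1 => addOn U (derivedFlag U Δ k)
      (spanOn U (bracketSet (derivedFlag U Δ k) (derivedFlag U Δ k)))

end

noncomputable section

/-- Iterated left-nested bracket: `nestedBracket Y 0 = Y 0`,
`nestedBracket Y (j+1) = [Y (j+1), nestedBracket Y j]`, so that
`nestedBracket Y (k+1) = [Y^{k+2}, [Y^{k+1}, [⋯, [Y², Y¹]⋯]]]` (with `Y j = Y^{j+1}`). -/
def nestedBracket {n : ℕ} (Y : ℕ → VF n) : ℕ → VF n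
  | 0 => Y 0
  | j + 1 => lieBracket (Y (j + 1)) (nestedBracket Y j)

/-- `P₀ = {X¹, X²}`, and `P_{k+1}` is the set of iterated left-nested brackets of
`k+2` elements of `P₀`. -/
def Pset {n : ℕ} (X1 X2 : VF n) : ℕ → Set (VF n)
  | 0 => {X1, X2}
  | k + 1 => { Z | ∃ Y : ℕ → VF n,
      (∀ j ≤ k + 1, Y j ∈ ({X1, X2} : Set (VF n))) ∧ Z = nestedBracket Y (k + 1) }

namespace LieFlagProof

open Set

variable {n : ℕ} {U : Set (Fin n → ℝ)}

/-- The subring of functions smooth on `U`. -/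
def Rng (n : ℕ) (U : Set (Fin n → ℝ)) : Subring ((Fin n → ℝ) → ℝ) where
  carrier := {f | ContDiffOn ℝ (⊤ : ℕ∞) f U}
  one_mem' := contDiffOn_const
  mul_mem' := fun hf hg => ContDiffOn.mul hf hg
  zero_mem' := contDiffOn_const
  add_mem' := fun hf hg => ContDiffOn.add hf hg
  neg_mem' := fun hf => ContDiffOn.neg hf

@[simp] theorem Rng.smul_apply (r : Rng n U) (X : VF n) (x : Fin n → ℝ) :
    (r • X) x = (r : (Fin n → ℝ) → ℝ) x • X x := rfl

/-- Vector fields vanishing on `U`. -/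
def Evan (n : ℕ) (U : Set (Fin n → ℝ)) : Submodule (Rng n U) (VF n) where
  carrier := {X | ∀ x ∈ U, X x = 0}
  add_mem' := fun {X Y} hX hY x hx => by
    show X x + Y x = 0
    rw [hX x hx, hY x hx, add_zero]
  zero_mem' := fun x _ => rfl
  smul_mem' := fun r X hX x hx => by
    show (r : (Fin n → ℝ) → ℝ) x • X x = 0
    rw [hX x hx, smul_zero]

theorem sum_apply' {m : ℕ} (Y : Fin m → VF n) (x : Fin n → ℝ) :
    (∑ i, Y i) x = ∑ i, Y i x := by
  simp [Finset.sum_apply]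

theorem spanOn_eq (U : Set (Fin n → ℝ)) (S : Set (VF n)) :
    spanOn U S = ↑(Submodule.span (Rng n U) S ⊔ Evan n U) := by
  ext X
  constructor
  · rintro ⟨m, c, Y, hc, hY, hXval⟩
    refine Submodule.mem_sup.2 ⟨∑ i, ((⟨c i, hc i⟩ : Rng n U) • Y i),
      Submodule.sum_mem _ fun i _ => Submodule.smul_mem _ _ (Submodule.subset_span (hY i)),
      X - ∑ i, ((⟨c i, hc i⟩ : Rng n U) • Y i), ?_, by abel⟩
    intro x hx
    have : (∑ i, ((⟨c i, hc i⟩ : Rng n U) • Y i)) x = ∑ i, c i x • Y i x := by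
      rw [sum_apply']; rfl
    show X x - (∑ i, ((⟨c i, hc i⟩ : Rng n U) • Y i)) x = 0
    rw [this, ← hXval x hx, sub_self]
  · intro hX
    obtain ⟨Y, hY, Z, hZ, hYZ⟩ := Submodule.mem_sup.1 hX
    obtain ⟨m, f, g, hfg⟩ := Submodule.mem_span_set'.1 hY
    refine ⟨m, fun i => (f i : (Fin n → ℝ) → ℝ), fun i => (g i : VF n),
      fun i => (f i).2, fun i => (g i).2, fun x hx => ?_⟩
    have h1 : X x = Y x + Z x := by rw [← hYZ]; rfl
    have h2 : Y x = ∑ i, (f i : (Fin n → ℝ) → ℝ) x • (g i : VF n) x := by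
      rw [← hfg, sum_apply']; rfl
    rw [h1, h2, hZ x hx, add_zero]

theorem addOn_eq (U : Set (Fin n → ℝ)) (A B : Submodule (Rng n U) (VF n))
    (hA : Evan n U ≤ A) :
    addOn U (A : Set (VF n)) (B : Set (VF n)) = ↑(A ⊔ B) := by
  ext X
  constructor
  · rintro ⟨Y, hY, Z, hZ, hXYZ⟩
    have he : X - (Y + Z) ∈ Evan n U := fun x hx => by
      show X x - (Y x + Z x) = 0
      rw [← hXYZ x hx, sub_self]
    exact Submodule.mem_sup.2 ⟨Y + (X - (Y + Z)), A.add_mem hY (hA he), Z, hZ, by abel⟩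
  · intro hX
    obtain ⟨Y, hY, Z, hZ, hYZ⟩ := Submodule.mem_sup.1 hX
    exact ⟨Y, hY, Z, hZ, fun x _ => by rw [← hYZ]; rfl⟩

theorem lieBracket_smooth (hU : IsOpen U) {X Y : VF n}
    (hX : ContDiffOn ℝ (⊤ : ℕ∞) X U) (hY : ContDiffOn ℝ (⊤ : ℕ∞) Y U) :
    ContDiffOn ℝ (⊤ : ℕ∞) (lieBracket X Y) U :=
  ((hY.fderiv_of_isOpen hU (by simp)).clm_apply hX).sub
    ((hX.fderiv_of_isOpen hU (by simp)).clm_apply hY)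

theorem lieBracket_swap (X Y : VF n) : lieBracket X Y = -lieBracket Y X := by
  funext x
  show _ = -(fderiv ℝ X x (Y x) - fderiv ℝ Y x (X x))
  rw [neg_sub]
  rfl

theorem nestedBracket_congr {Y Y' : ℕ → VF n} {k : ℕ} (h : ∀ i ≤ k, Y i = Y' i) :
    nestedBracket Y k = nestedBracket Y' k := by
  induction k with
  | zero => exact h 0 le_rfl
  | succ k ih =>
    show lieBracket (Y (k+1)) (nestedBracket Y k) = lieBracket (Y' (k+1)) (nestedBracket Y' k)
    rw [h (k+1) le_rfl, ih fun i hi => h i (hi.trans (Nat.le_succ k))]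

theorem nestedBracket_smooth (hU : IsOpen U) {Y : ℕ → VF n} {k : ℕ}
    (h : ∀ i ≤ k, ContDiffOn ℝ (⊤ : ℕ∞) (Y i) U) : ContDiffOn ℝ (⊤ : ℕ∞) (nestedBracket Y k) U := by
  induction k with
  | zero => exact h 0 le_rfl
  | succ k ih =>
    exact lieBracket_smooth hU (h (k+1) le_rfl) (ih fun i hi => h i (hi.trans (Nat.le_succ k)))

theorem mem_pair_smooth {X1 X2 Z : VF n} (hX1 : ContDiffOn ℝ (⊤ : ℕ∞) X1 U)
    (hX2 : ContDiffOn ℝ (⊤ : ℕ∞) X2 U) (hZ : Z ∈ ({X1, X2} : Set (VF n))) :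
    ContDiffOn ℝ (⊤ : ℕ∞) Z U := by
  rcases hZ with rfl | hZ
  · exact hX1
  · rw [Set.mem_singleton_iff] at hZ; rw [hZ]; exact hX2

theorem mem_Pset_smooth (hU : IsOpen U) {X1 X2 : VF n} (hX1 : ContDiffOn ℝ (⊤ : ℕ∞) X1 U)
    (hX2 : ContDiffOn ℝ (⊤ : ℕ∞) X2 U) {j : ℕ} {Z : VF n} (hZ : Z ∈ Pset X1 X2 j) :
    ContDiffOn ℝ (⊤ : ℕ∞) Z U := by
  cases j with
  | zero => exact mem_pair_smooth hX1 hX2 hZ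
  | succ k =>
    obtain ⟨Y, hY, rfl⟩ := hZ
    exact nestedBracket_smooth hU fun i hi => mem_pair_smooth hX1 hX2 (hY i hi)

theorem nested_mem_Pset {X1 X2 : VF n} {Y : ℕ → VF n} {k : ℕ}
    (h : ∀ i ≤ k, Y i ∈ ({X1, X2} : Set (VF n))) : nestedBracket Y k ∈ Pset X1 X2 k := by
  cases k with
  | zero => exact h 0 le_rfl
  | succ k => exact ⟨Y, h, rfl⟩

theorem bracket_mem_Pset {X1 X2 Z W : VF n} {j : ℕ}
    (hW : W ∈ Pset X1 X2 j) (hZ : Z ∈ ({X1, X2} : Set (VF n))) :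
    lieBracket Z W ∈ Pset X1 X2 (j + 1) := by
  cases j with
  | zero =>
    refine ⟨fun i => if i = 0 then W else Z, fun i _ => ?_, ?_⟩
    · by_cases h : i = 0
      · simpa [h, Pset] using hW
      · simpa [h] using hZ
    · show lieBracket Z W = lieBracket (if (1:ℕ) = 0 then W else Z) (if (0:ℕ) = 0 then W else Z)
      norm_num
  | succ k =>
    obtain ⟨Y, hY, rfl⟩ := hW
    refine ⟨fun i => if i = k + 2 then Z else Y i, fun i hi => ?_, ?_⟩
    · by_cases h : i = k + 2
      · simp [h, hZ]
      · simpa [h] using hY i (by omega)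
    · show lieBracket Z (nestedBracket Y (k+1))
        = lieBracket (if k + 2 = k + 2 then Z else Y (k+2))
            (nestedBracket (fun i => if i = k + 2 then Z else Y i) (k+1))
      rw [if_pos rfl, nestedBracket_congr (Y' := fun i => if i = k + 2 then Z else Y i)
        (fun i hi => (if_neg (by omega)).symm)]

end LieFlagProof

namespace LieFlagProof

variable {n : ℕ} {U : Set (Fin n → ℝ)}

theorem fderiv_sum_smul_apply (hU : IsOpen U) {x : Fin n → ℝ} (hx : x ∈ U) {q : ℕ}
    {H : Fin q → ((Fin n → ℝ) → ℝ)} {W : Fin q → VF n}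
    (hH : ∀ j, ContDiffOn ℝ (⊤ : ℕ∞) (H j) U) (hW : ∀ j, ContDiffOn ℝ (⊤ : ℕ∞) (W j) U)
    (v : Fin n → ℝ) :
    fderiv ℝ (fun y => ∑ j, H j y • W j y) x v
      = ∑ j, (H j x • fderiv ℝ (W j) x v + fderiv ℝ (H j) x v • W j x) := by
  have dH : ∀ j, DifferentiableAt ℝ (H j) x := fun j =>
    ((hH j).differentiableOn (by simp)).differentiableAt (hU.mem_nhds hx)
  have dW : ∀ j, DifferentiableAt ℝ (W j) x := fun j =>
    ((hW j).differentiableOn (by simp)).differentiableAt (hU.mem_nhds hx)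
  rw [fderiv_fun_sum (A := fun j y => H j y • W j y) fun j _ => (dH j).smul (dW j), ContinuousLinearMap.sum_apply]
  refine Finset.sum_congr rfl fun j _ => ?_
  rw [fderiv_fun_smul (dH j) (dW j)]
  simp

theorem bracket_span_subset (hU : IsOpen U) {S T : Set (VF n)}
    (hS : ∀ Z ∈ S, ContDiffOn ℝ (⊤ : ℕ∞) Z U) (hT : ∀ Z ∈ T, ContDiffOn ℝ (⊤ : ℕ∞) Z U) :
    bracketSet (↑(Submodule.span (Rng n U) S ⊔ Evan n U) : Set (VF n))
        (↑(Submodule.span (Rng n U) T ⊔ Evan n U) : Set (VF n))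
      ⊆ ↑(Submodule.span (Rng n U) (bracketSet S T ∪ S ∪ T) ⊔ Evan n U) := by
  rintro _ ⟨X, hX, Y, hY, rfl⟩
  obtain ⟨X', hX', eX, heX, hXeq⟩ := Submodule.mem_sup.1 hX
  obtain ⟨Y', hY', eY, heY, hYeq⟩ := Submodule.mem_sup.1 hY
  obtain ⟨p, f, g, hg⟩ := Submodule.mem_span_set'.1 hX'
  obtain ⟨q, h, w, hw⟩ := Submodule.mem_span_set'.1 hY'
  set F : Fin p → ((Fin n → ℝ) → ℝ) := fun i => (f i : (Fin n → ℝ) → ℝ) with hF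
  set G : Fin p → VF n := fun i => (g i : VF n) with hG
  set H : Fin q → ((Fin n → ℝ) → ℝ) := fun j => (h j : (Fin n → ℝ) → ℝ) with hH
  set W : Fin q → VF n := fun j => (w j : VF n) with hW
  have hFs : ∀ i, ContDiffOn ℝ (⊤ : ℕ∞) (F i) U := fun i => (f i).2
  have hGs : ∀ i, ContDiffOn ℝ (⊤ : ℕ∞) (G i) U := fun i => hS _ (g i).2
  have hHs : ∀ j, ContDiffOn ℝ (⊤ : ℕ∞) (H j) U := fun j => (h j).2
  have hWs : ∀ j, ContDiffOn ℝ (⊤ : ℕ∞) (W j) U := fun j => hT _ (w j).2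
  set XS : VF n := fun x => ∑ i, F i x • G i x with hXS
  set YS : VF n := fun x => ∑ j, H j x • W j x with hYS
  have hXSs : ContDiffOn ℝ (⊤ : ℕ∞) XS U :=
    ContDiffOn.sum fun i _ => (hFs i).smul (hGs i)
  have hYSs : ContDiffOn ℝ (⊤ : ℕ∞) YS U :=
    ContDiffOn.sum fun j _ => (hHs j).smul (hWs j)
  have hXeqOn : Set.EqOn X XS U := by
    intro x hx
    have h1 : X x = X' x + eX x := by rw [← hXeq]; rfl
    have h2 : X' x = XS x := by rw [← hg, sum_apply']; rfl
    rw [h1, h2, heX x hx, add_zero]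
  have hYeqOn : Set.EqOn Y YS U := by
    intro x hx
    have h1 : Y x = Y' x + eY x := by rw [← hYeq]; rfl
    have h2 : Y' x = YS x := by rw [← hw, sum_apply']; rfl
    rw [h1, h2, heY x hx, add_zero]
  -- the correction coefficients
  have he : ∀ j : Fin q, ContDiffOn ℝ (⊤ : ℕ∞) (fun x => fderiv ℝ (H j) x (XS x)) U := fun j =>
    (((hHs j).fderiv_of_isOpen hU (by simp)).clm_apply hXSs)
  have hd : ∀ i : Fin p, ContDiffOn ℝ (⊤ : ℕ∞) (fun x => -(fderiv ℝ (F i) x (YS x))) U := fun i =>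
    (((hFs i).fderiv_of_isOpen hU (by simp)).clm_apply hYSs).neg
  set B : VF n :=
    (∑ i, ∑ j, ((f i * h j : Rng n U) • lieBracket (G i) (W j)))
      + (∑ j, ((⟨fun x => fderiv ℝ (H j) x (XS x), he j⟩ : Rng n U) • W j))
      + (∑ i, ((⟨fun x => -(fderiv ℝ (F i) x (YS x)), hd i⟩ : Rng n U) • G i)) with hB
  have hBmem : B ∈ Submodule.span (Rng n U) (bracketSet S T ∪ S ∪ T) := by
    refine Submodule.add_mem _ (Submodule.add_mem _ ?_ ?_) ?_
    · exact Submodule.sum_mem _ fun i _ => Submodule.sum_mem _ fun j _ =>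
        Submodule.smul_mem _ _ (Submodule.subset_span
          (Or.inl (Or.inl ⟨G i, (g i).2, W j, (w j).2, rfl⟩)))
    · exact Submodule.sum_mem _ fun j _ =>
        Submodule.smul_mem _ _ (Submodule.subset_span (Or.inr (w j).2))
    · exact Submodule.sum_mem _ fun i _ =>
        Submodule.smul_mem _ _ (Submodule.subset_span (Or.inl (Or.inr (g i).2)))
  have hEmem : lieBracket X Y - B ∈ Evan n U := by
    intro x hx
    have dG : ∀ i, DifferentiableAt ℝ (G i) x := fun i =>
      ((hGs i).differentiableOn (by simp)).differentiableAt (hU.mem_nhds hx)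
    have dW : ∀ j, DifferentiableAt ℝ (W j) x := fun j =>
      ((hWs j).differentiableOn (by simp)).differentiableAt (hU.mem_nhds hx)
    have hfX : fderiv ℝ X x = fderiv ℝ XS x :=
      (Filter.eventuallyEq_of_mem (hU.mem_nhds hx) hXeqOn).fderiv_eq
    have hfY : fderiv ℝ Y x = fderiv ℝ YS x :=
      (Filter.eventuallyEq_of_mem (hU.mem_nhds hx) hYeqOn).fderiv_eq
    have hL : lieBracket X Y x
        = ∑ j, (H j x • fderiv ℝ (W j) x (XS x) + fderiv ℝ (H j) x (XS x) • W j x)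
          - ∑ i, (F i x • fderiv ℝ (G i) x (YS x) + fderiv ℝ (F i) x (YS x) • G i x) := by
      show fderiv ℝ Y x (X x) - fderiv ℝ X x (Y x) = _
      rw [hfX, hfY, hXeqOn hx, hYeqOn hx,
        fderiv_sum_smul_apply hU hx hHs hWs, fderiv_sum_smul_apply hU hx hFs hGs]
    have hBx : B x
        = ∑ i, ∑ j, (F i x * H j x)
            • (fderiv ℝ (W j) x (G i x) - fderiv ℝ (G i) x (W j x))
          + ∑ j, fderiv ℝ (H j) x (XS x) • W j x
          + ∑ i, -(fderiv ℝ (F i) x (YS x)) • G i x := by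
      show (∑ i, ∑ j, ((f i * h j : Rng n U) • lieBracket (G i) (W j))) x
          + (∑ j, ((⟨fun x => fderiv ℝ (H j) x (XS x), he j⟩ : Rng n U) • W j)) x
          + (∑ i, ((⟨fun x => -(fderiv ℝ (F i) x (YS x)), hd i⟩ : Rng n U) • G i)) x = _
      rw [sum_apply', sum_apply', sum_apply']
      congr 2
      · refine Finset.sum_congr rfl fun i _ => ?_
        rw [sum_apply']
        rfl
    -- key bilinearity computations
    have key1 : ∀ j, fderiv ℝ (W j) x (XS x) = ∑ i, F i x • fderiv ℝ (W j) x (G i x) := by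
      intro j
      show fderiv ℝ (W j) x (∑ i, F i x • G i x) = _
      rw [map_sum]
      exact Finset.sum_congr rfl fun i _ => (fderiv ℝ (W j) x).map_smul _ _
    have key2 : ∀ i, fderiv ℝ (G i) x (YS x) = ∑ j, H j x • fderiv ℝ (G i) x (W j x) := by
      intro i
      show fderiv ℝ (G i) x (∑ j, H j x • W j x) = _
      rw [map_sum]
      exact Finset.sum_congr rfl fun j _ => (fderiv ℝ (G i) x).map_smul _ _
    show lieBracket X Y x - B x = 0
    rw [sub_eq_zero, hL, hBx]
    simp only [key1, key2, smul_sub, Finset.sum_add_distrib, Finset.sum_sub_distrib,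
      Finset.smul_sum, smul_smul, neg_smul, Finset.sum_neg_distrib]
    rw [Finset.sum_comm (f := fun j i => (H j x * F i x) • fderiv ℝ (W j) x (G i x))]
    simp only [mul_comm]
    abel
  refine Submodule.mem_sup.2 ⟨B, hBmem, lieBracket X Y - B, hEmem, by abel⟩

end LieFlagProof

namespace LieFlagProof

variable {n : ℕ} {U : Set (Fin n → ℝ)}

/-- The distribution (as a submodule) generated by `S`, up to vanishing on `U`. -/
def sp (n : ℕ) (U : Set (Fin n → ℝ)) (S : Set (VF n)) : Submodule (Rng n U) (VF n) :=
  Submodule.span (Rng n U) S ⊔ Evan n U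

theorem spanOn_eq' (U : Set (Fin n → ℝ)) (S : Set (VF n)) :
    spanOn U S = ↑(sp n U S) := spanOn_eq U S

theorem Evan_le_sp (S : Set (VF n)) : Evan n U ≤ sp n U S := le_sup_right

theorem mem_sp_of_mem {S : Set (VF n)} {Z : VF n} (hZ : Z ∈ S) : Z ∈ sp n U S :=
  Submodule.mem_sup_left (Submodule.subset_span hZ)

theorem sp_le {S : Set (VF n)} {M : Submodule (Rng n U) (VF n)}
    (h : S ⊆ ↑M) (hE : Evan n U ≤ M) : sp n U S ≤ M :=
  sup_le (Submodule.span_le.2 h) hE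

theorem sp_mono {S T : Set (VF n)} (h : S ⊆ T) : sp n U S ≤ sp n U T :=
  sup_le_sup_right (Submodule.span_mono h) _

theorem sp_union (S T : Set (VF n)) : sp n U (S ∪ T) = sp n U S ⊔ sp n U T := by
  unfold sp
  rw [Submodule.span_union, sup_sup_sup_comm, sup_idem]

theorem bracket_sp_subset (hU : IsOpen U) {S T : Set (VF n)}
    (hS : ∀ Z ∈ S, ContDiffOn ℝ (⊤ : ℕ∞) Z U) (hT : ∀ Z ∈ T, ContDiffOn ℝ (⊤ : ℕ∞) Z U) :
    bracketSet (↑(sp n U S) : Set (VF n)) (↑(sp n U T) : Set (VF n))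
      ⊆ ↑(sp n U (bracketSet S T ∪ S ∪ T)) :=
  bracket_span_subset hU hS hT

/-- The union of the `Pset`s up to level `k`. -/
def gen (X1 X2 : VF n) (k : ℕ) : Set (VF n) := ⋃ j, ⋃ (_ : j ≤ k), Pset X1 X2 j

theorem gen_zero (X1 X2 : VF n) : gen X1 X2 0 = ({X1, X2} : Set (VF n)) := by
  ext Z
  simp only [gen, Set.mem_iUnion]
  constructor
  · rintro ⟨j, hj, hZ⟩
    rw [Nat.le_zero] at hj
    subst hj
    exact hZ
  · intro hZ
    exact ⟨0, le_rfl, hZ⟩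

theorem gen_succ (X1 X2 : VF n) (k : ℕ) :
    gen X1 X2 (k + 1) = gen X1 X2 k ∪ Pset X1 X2 (k + 1) := by
  ext Z
  simp only [gen, Set.mem_iUnion, Set.mem_union]
  constructor
  · rintro ⟨j, hj, hZ⟩
    rcases (by omega : j ≤ k ∨ j = k + 1) with hj' | rfl
    · exact Or.inl ⟨j, hj', hZ⟩
    · exact Or.inr hZ
  · rintro (⟨j, hj, hZ⟩ | hZ)
    · exact ⟨j, by omega, hZ⟩
    · exact ⟨k + 1, le_rfl, hZ⟩

theorem gen_smooth (hU : IsOpen U) {X1 X2 : VF n} (hX1 : ContDiffOn ℝ (⊤ : ℕ∞) X1 U)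
    (hX2 : ContDiffOn ℝ (⊤ : ℕ∞) X2 U) {k : ℕ} : ∀ Z ∈ gen X1 X2 k, ContDiffOn ℝ (⊤ : ℕ∞) Z U := by
  intro Z hZ
  simp only [gen, Set.mem_iUnion] at hZ
  obtain ⟨j, _, hZ⟩ := hZ
  exact mem_Pset_smooth hU hX1 hX2 hZ

theorem gen_mono (X1 X2 : VF n) {k l : ℕ} (h : k ≤ l) : gen X1 X2 k ⊆ gen X1 X2 l := by
  intro Z hZ
  simp only [gen, Set.mem_iUnion] at hZ ⊢
  obtain ⟨j, hj, hZ⟩ := hZ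
  exact ⟨j, hj.trans h, hZ⟩

theorem mem_gen_of_mem_Pset {X1 X2 : VF n} {j k : ℕ} (hj : j ≤ k) {Z : VF n}
    (hZ : Z ∈ Pset X1 X2 j) : Z ∈ gen X1 X2 k := by
  simp only [gen, Set.mem_iUnion]
  exact ⟨j, hj, hZ⟩

/-- The key step equality. -/
theorem step_eq (hU : IsOpen U) (X1 X2 : VF n) (hX1 : ContDiffOn ℝ (⊤ : ℕ∞) X1 U)
    (hX2 : ContDiffOn ℝ (⊤ : ℕ∞) X2 U) (k : ℕ) :
    sp n U (gen X1 X2 k)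
        ⊔ sp n U (bracketSet (↑(sp n U (gen X1 X2 k)) : Set (VF n))
            (↑(sp n U ({X1, X2} : Set (VF n))) : Set (VF n)))
      = sp n U (gen X1 X2 (k + 1)) := by
  apply le_antisymm
  · refine sup_le (sp_mono (gen_mono X1 X2 (Nat.le_succ k))) ?_
    refine le_trans ?_ (le_refl (sp n U (gen X1 X2 (k + 1))))
    refine sp_le ?_ (Evan_le_sp _)
    refine (bracket_sp_subset hU (gen_smooth hU hX1 hX2)
      (fun Z hZ => mem_pair_smooth hX1 hX2 hZ)).trans ?_
    refine SetLike.coe_subset_coe.2 (sp_le ?_ (Evan_le_sp _))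
    rintro Z (hZ | hZ)
    · rcases hZ with hZ | hZ
      · obtain ⟨W, hW, Z0, hZ0, rfl⟩ := hZ
        simp only [gen, Set.mem_iUnion] at hW
        obtain ⟨j, hj, hW⟩ := hW
        have h1 : lieBracket Z0 W ∈ gen X1 X2 (k + 1) :=
          mem_gen_of_mem_Pset (by omega) (bracket_mem_Pset hW hZ0)
        have : lieBracket W Z0 ∈ sp n U (gen X1 X2 (k + 1)) := by
          rw [lieBracket_swap]
          exact Submodule.neg_mem _ (mem_sp_of_mem h1)
        exact this
      · exact mem_sp_of_mem (gen_mono X1 X2 (Nat.le_succ k) hZ)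
    · exact mem_sp_of_mem (mem_gen_of_mem_Pset (Nat.zero_le _) (show Z ∈ Pset X1 X2 0 from hZ))
  · refine sp_le ?_ ((Evan_le_sp _).trans le_sup_left)
    rw [gen_succ]
    rintro Z (hZ | hZ)
    · exact Submodule.mem_sup_left (mem_sp_of_mem hZ)
    · obtain ⟨Y, hY, rfl⟩ := hZ
      have h1 : nestedBracket Y k ∈ (↑(sp n U (gen X1 X2 k)) : Set (VF n)) :=
        mem_sp_of_mem (mem_gen_of_mem_Pset le_rfl (nested_mem_Pset fun i hi => hY i (by omega)))
      have h2 : Y (k + 1) ∈ (↑(sp n U ({X1, X2} : Set (VF n))) : Set (VF n)) :=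
        mem_sp_of_mem (hY (k + 1) le_rfl)
      have h4 : nestedBracket Y (k + 1)
          ∈ sp n U (bracketSet (↑(sp n U (gen X1 X2 k)) : Set (VF n))
              (↑(sp n U ({X1, X2} : Set (VF n))) : Set (VF n))) := by
        show lieBracket (Y (k + 1)) (nestedBracket Y k) ∈ _
        rw [lieBracket_swap]
        exact Submodule.neg_mem _
          (mem_sp_of_mem ⟨nestedBracket Y k, h1, Y (k + 1), h2, rfl⟩)
      exact Submodule.mem_sup_right h4

theorem main_aux (hU : IsOpen U) (X1 X2 : VF n) (hX1 : ContDiffOn ℝ (⊤ : ℕ∞) X1 U)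
    (hX2 : ContDiffOn ℝ (⊤ : ℕ∞) X2 U) (k : ℕ) :
    lieFlag U (spanOn U {X1, X2}) k = ↑(sp n U (gen X1 X2 k)) := by
  induction k with
  | zero =>
    rw [gen_zero]
    exact spanOn_eq' U {X1, X2}
  | succ k ih =>
    show addOn U (lieFlag U (spanOn U {X1, X2}) k)
        (spanOn U (bracketSet (lieFlag U (spanOn U {X1, X2}) k) (spanOn U {X1, X2}))) = _
    rw [ih, spanOn_eq' U ({X1, X2} : Set (VF n)), spanOn_eq' U (bracketSet _ _),
      addOn_eq U _ _ (Evan_le_sp _)]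
    rw [← step_eq hU X1 X2 hX1 hX2 k]

end LieFlagProof


/-- For `Δ = span_{C^∞(U)}{X¹, X²}` with Lie flag `(F_k)`:
`F₀ = Δ` and, for every `k`, `F_{k+1} = span_{C^∞(U)}(⋃_{j=0}^{k+1} P_j)
= F_k + span_{C^∞(U)}(P_{k+1})`. -/
theorem lieFlag_eq_span_nested_brackets {n : ℕ} (U : Set (Fin n → ℝ)) (hU : IsOpen U)
    (X1 X2 : VF n) (hX1 : ContDiffOn ℝ (⊤ : ℕ∞) X1 U) (hX2 : ContDiffOn ℝ (⊤ : ℕ∞) X2 U) :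
    lieFlag U (spanOn U {X1, X2}) 0 = spanOn U {X1, X2} ∧
    ∀ k : ℕ,
      lieFlag U (spanOn U {X1, X2}) (k + 1) =
        spanOn U (⋃ j, ⋃ (_ : j ≤ k + 1), Pset X1 X2 j) ∧
      lieFlag U (spanOn U {X1, X2}) (k + 1) =
        addOn U (lieFlag U (spanOn U {X1, X2}) k) (spanOn U (Pset X1 X2 (k + 1))) := by
  open LieFlagProof in
  refine ⟨rfl, fun k => ⟨?_, ?_⟩⟩
  · rw [main_aux hU X1 X2 hX1 hX2 (k + 1)]
    exact (spanOn_eq' U _).symm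
  · rw [main_aux hU X1 X2 hX1 hX2 (k + 1), main_aux hU X1 X2 hX1 hX2 k,
      spanOn_eq' U (Pset X1 X2 (k + 1)), addOn_eq U _ _ (Evan_le_sp _)]
    have : gen X1 X2 (k + 1) = gen X1 X2 k ∪ Pset X1 X2 (k + 1) := gen_succ X1 X2 k
    rw [show gen X1 X2 (k+1) = gen X1 X2 k ∪ Pset X1 X2 (k+1) from gen_succ X1 X2 k,
      sp_union]

end
end

section
/- Let U ⊆ ℝⁿ be open, let g₁, g₂ be vector fields on U, and let β = (β_{ij}) : U → ℝ^{2×2} be smooth with β(x) invertible for every x ∈ U. Define the vector fields ĝ₁ = β₁₁g₁ + β₁₂g₂ and ĝ₂ = β₂₁g₁ + β₂₂g₂. Let (F_k), (G_k) be the Lie and derived flags of Δ = span_{C^∞(U)}{g₁, g₂}, and let (F̂_k), (Ĝ_k) be the Lie and derived flags of Δ̂ = span_{C^∞(U)}{ĝ₁, ĝ₂}. Then F_k = F̂_k and G_k = Ĝ_k for every k ∈ ℕ. -/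
noncomputable section


open Classical in
lemma mem_spanOn_pair {n : ℕ} {U : Set (Fin n → ℝ)} {a b X : VF n} :
    X ∈ spanOn U {a, b} ↔ ∃ c d : (Fin n → ℝ) → ℝ,
      ContDiffOn ℝ (⊤ : ℕ∞) c U ∧ ContDiffOn ℝ (⊤ : ℕ∞) d U ∧
      ∀ x ∈ U, X x = c x • a x + d x • b x := by
  constructor
  · rintro ⟨m, c, Y, hc, hY, hX⟩
    refine ⟨fun x => ∑ i, if Y i = a then c i x else 0,
            fun x => ∑ i, if Y i = a then 0 else c i x, ?_, ?_, ?_⟩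
    · apply ContDiffOn.sum; intro i _
      by_cases h : Y i = a <;> simp [h, hc i, contDiffOn_const]
    · apply ContDiffOn.sum; intro i _
      by_cases h : Y i = a <;> simp [h, hc i, contDiffOn_const]
    · intro x hx
      rw [hX x hx, Finset.sum_smul, Finset.sum_smul, ← Finset.sum_add_distrib]
      refine Finset.sum_congr rfl fun i _ => ?_
      by_cases h' : Y i = a
      · simp [h', if_pos h']
      · have h : Y i = b := (hY i).resolve_left h'
        have hba : ¬ b = a := fun hba => h' (h.trans hba)
        simp [h, hba]
  · rintro ⟨c, d, hc, hd, hX⟩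
    refine ⟨2, ![c, d], ![a, b], ?_, ?_, fun x hx => ?_⟩
    · intro i; fin_cases i <;> simpa
    · intro i; fin_cases i <;> simp
    · simpa [Fin.sum_univ_two] using hX x hx

lemma spanOn_pair_subset {n : ℕ} {U : Set (Fin n → ℝ)} {a b a' b' : VF n}
    (p q r s : (Fin n → ℝ) → ℝ)
    (hp : ContDiffOn ℝ (⊤ : ℕ∞) p U) (hq : ContDiffOn ℝ (⊤ : ℕ∞) q U)
    (hr : ContDiffOn ℝ (⊤ : ℕ∞) r U) (hs : ContDiffOn ℝ (⊤ : ℕ∞) s U)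
    (ha' : ∀ x ∈ U, a' x = p x • a x + q x • b x)
    (hb' : ∀ x ∈ U, b' x = r x • a x + s x • b x) :
    spanOn U {a', b'} ⊆ spanOn U {a, b} := by
  intro X hX
  rw [mem_spanOn_pair] at hX ⊢
  obtain ⟨c, d, hc, hd, hXx⟩ := hX
  refine ⟨fun x => c x * p x + d x * r x, fun x => c x * q x + d x * s x,
    (hc.mul hp).add (hd.mul hr), (hc.mul hq).add (hd.mul hs), fun x hx => ?_⟩
  rw [hXx x hx, ha' x hx, hb' x hx]
  simp only [smul_add, smul_smul, add_smul]
  abel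

/-- The Lie flag and the derived flag of
`Δ = span_{C^∞(U)}{g₁, g₂}` are invariant under an invertible smooth change
`ĝ₁ = β₁₁g₁ + β₁₂g₂`, `ĝ₂ = β₂₁g₁ + β₂₂g₂` of generators (regular static state feedback). -/
theorem flags_invariant_under_regular_feedback {n : ℕ} (U : Set (Fin n → ℝ)) (hU : IsOpen U)
    (g1 g2 : VF n) (hg1 : ContDiffOn ℝ (⊤ : ℕ∞) g1 U) (hg2 : ContDiffOn ℝ (⊤ : ℕ∞) g2 U)
    (β : (Fin n → ℝ) → Matrix (Fin 2) (Fin 2) ℝ)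
    (hβ : ∀ i j, ContDiffOn ℝ (⊤ : ℕ∞) (fun x => β x i j) U)
    (hβinv : ∀ x ∈ U, (β x).det ≠ 0) :
    ∀ k : ℕ,
      lieFlag U (spanOn U {g1, g2}) k =
        lieFlag U (spanOn U
          {fun x => β x 0 0 • g1 x + β x 0 1 • g2 x,
           fun x => β x 1 0 • g1 x + β x 1 1 • g2 x}) k ∧
      derivedFlag U (spanOn U {g1, g2}) k =
        derivedFlag U (spanOn U
          {fun x => β x 0 0 • g1 x + β x 0 1 • g2 x,
           fun x => β x 1 0 • g1 x + β x 1 1 • g2 x}) k := by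
  set D : (Fin n → ℝ) → ℝ := fun x => β x 0 0 * β x 1 1 - β x 0 1 * β x 1 0 with hDdef
  have hD : ∀ x ∈ U, D x ≠ 0 := by
    intro x hx
    have := hβinv x hx
    rwa [Matrix.det_fin_two] at this
  have hDsm : ContDiffOn ℝ (⊤ : ℕ∞) D U := ((hβ 0 0).mul (hβ 1 1)).sub ((hβ 0 1).mul (hβ 1 0))
  have hspan : spanOn U {g1, g2} = spanOn U
      ({fun x => β x 0 0 • g1 x + β x 0 1 • g2 x,
        fun x => β x 1 0 • g1 x + β x 1 1 • g2 x} : Set (VF n)) := by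
    apply Set.Subset.antisymm
    · refine spanOn_pair_subset (fun x => β x 1 1 / D x) (fun x => -β x 0 1 / D x)
        (fun x => -β x 1 0 / D x) (fun x => β x 0 0 / D x)
        ((hβ 1 1).div hDsm hD) ((hβ 0 1).neg.div hDsm hD)
        ((hβ 1 0).neg.div hDsm hD) ((hβ 0 0).div hDsm hD) ?_ ?_
      · intro x hx
        have hDx := hD x hx
        funext j
        simp only [Pi.add_apply, Pi.smul_apply, smul_eq_mul]
        field_simp
        ring
      · intro x hx
        have hDx := hD x hx
        funext j
        simp only [Pi.add_apply, Pi.smul_apply, smul_eq_mul]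
        field_simp
        ring
    · exact spanOn_pair_subset (fun x => β x 0 0) (fun x => β x 0 1)
        (fun x => β x 1 0) (fun x => β x 1 1)
        (hβ 0 0) (hβ 0 1) (hβ 1 0) (hβ 1 1)
        (fun x _ => rfl) (fun x _ => rfl)
  intro k
  rw [hspan]
  exact ⟨rfl, rfl⟩

end
end

section
/- Let n ≥ 4 and 1 ≤ k ≤ n−3. For 1 ≤ i ≤ n−2−k, define the 1-form λⁱ on ℝⁿ by λⁱ(q) = eᵢ* − q_{i+1} eₙ* (i.e., λⁱ = dz_i − z_{i+1} dz_n), and let Λᵏ = span_{C^∞(ℝⁿ)}{λ¹, …, λ^{n−2−k}}. Then for every q ∈ ℝⁿ, the associated (Cauchy characteristic) space satisfies A(Λᵏ)_q = span_ℝ{e_{n−k}, e_{n−k+1}, …, e_{n−1}}, and consequently the retracting space satisfies C(Λᵏ)_q = span_ℝ{e₁*, …, e_{n−1−k}*, eₙ*}, which contains span_ℝ{λ¹(q), …, λ^{n−2−k}(q)}. -/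
noncomputable section

/-- Covectors on `ℝⁿ`. -/
abbrev Covector (n : ℕ) := (Fin n → ℝ) →L[ℝ] ℝ

/-- The `j`-th coordinate functional `eⱼ*`. -/
def coproj {n : ℕ} (j : Fin n) : Covector n := ContinuousLinearMap.proj j

/-- The 1-form `λⁱ(q) = eᵢ* − q_{i+1} eₙ*` (0-based index `i`; the `1`-based form
`dz_{i+1} − z_{i+2} dz_n` is `lam n i`); junk value `0` for out-of-range `i`. -/
def lam (n : ℕ) (i : ℕ) (q : Fin n → ℝ) : Covector n :=
  if h : i + 1 < n then
    coproj ⟨i, by omega⟩ - q ⟨i + 1, h⟩ • coproj ⟨n - 1, by omega⟩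
  else 0

/-- The interior product `ι_v dω(q)`, i.e. the covector
`w ↦ dω(q)(v,w) = (Dω(q)(v))(w) − (Dω(q)(w))(v)`. -/
def intExtDer {n : ℕ} (ω : (Fin n → ℝ) → Covector n) (q v : Fin n → ℝ) : Covector n :=
  fderiv ℝ ω q v - (fderiv ℝ ω q).flip v

/-- `span_ℝ{λ¹(q), …, λ^{n−2−k}(q)}` (0-based: `lam n i q` for `i + k + 3 ≤ n`). -/
def lamSpanPt (n k : ℕ) (q : Fin n → ℝ) : Submodule ℝ (Covector n) :=
  Submodule.span ℝ { ξ | ∃ i : ℕ, i + k + 3 ≤ n ∧ ξ = lam n i q }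

/-- The associated (Cauchy characteristic) space `A(Λᵏ)_q` of
`Λᵏ = span_{C^∞}{λ¹, …, λ^{n−2−k}}` at `q`. -/
def assocPt (n k : ℕ) (q : Fin n → ℝ) : Set (Fin n → ℝ) :=
  { v | ∀ i : ℕ, i + k + 3 ≤ n →
      lam n i q v = 0 ∧ intExtDer (lam n i) q v ∈ lamSpanPt n k q }

/-- The retracting space `C(Λᵏ)_q`, the annihilator of `A(Λᵏ)_q`. -/
def retractPt (n k : ℕ) (q : Fin n → ℝ) : Set (Covector n) :=
  { ξ | ∀ v ∈ assocPt n k q, ξ v = 0 }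

/-!
The derivative of `λⁱ = dzᵢ − z_{i+1} dzₙ` is constant, so `ι_v dλⁱ = vₙ dz_{i+1} − v_{i+1} dzₙ`.
A covector in `span{λⁱ(q)}` vanishes on every vector killed by all `λⁱ(q)`, in particular on
`e_{n−1−k}` and on `∂ₙ + Σᵢ z_{i+1} ∂ᵢ`. Testing `ι_v dλ^{n−2−k}` on these two vectors forces
`vₙ = v_{n−1−k} = 0`, and then `λⁱ(v) = vᵢ − z_{i+1} vₙ = 0` forces `vᵢ = 0` for `i ≤ n−2−k`.
Conversely, for `v` supported on the coordinates `n−k, …, n−1` both conditions hold trivially.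
The retracting space is then spanned by the complementary coordinate functionals, and it contains
each `λⁱ(q)` since `λⁱ(q)` vanishes on `A(Λᵏ)_q` by definition.
-/

section

variable {n : ℕ}

lemma mem_span_single_iff (p : Fin n → Prop) (v : Fin n → ℝ) :
    v ∈ Submodule.span ℝ { w : Fin n → ℝ | ∃ j, p j ∧ w = Pi.single j (1 : ℝ) } ↔
      ∀ j, ¬ p j → v j = 0 := by
  constructor
  · intro hv j hj
    refine Submodule.span_le (p := LinearMap.ker (LinearMap.proj (R := ℝ) j)).2 ?_ hv
    rintro _ ⟨j', hj', rfl⟩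
    have : j' ≠ j := by rintro rfl; exact hj hj'
    simp [this.symm]
  · intro hv
    rw [pi_eq_sum_univ' v]
    refine Submodule.sum_mem _ fun j _ => ?_
    by_cases hj : p j
    · exact Submodule.smul_mem _ _ (Submodule.subset_span ⟨j, hj, rfl⟩)
    · simp [hv j hj]

lemma mem_span_coproj_iff (p : Fin n → Prop) (ξ : Covector n) :
    ξ ∈ Submodule.span ℝ { η : Covector n | ∃ j, p j ∧ η = coproj j } ↔
      ∀ j, ¬ p j → ξ (Pi.single j 1) = 0 := by
  constructor
  · intro hξ j hj
    refine Submodule.span_le (p := LinearMap.ker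
      ((ContinuousLinearMap.apply ℝ ℝ (Pi.single j 1 : Fin n → ℝ) : Covector n →L[ℝ] ℝ) :
        Covector n →ₗ[ℝ] ℝ)).2 ?_ hξ
    rintro _ ⟨j', hj', rfl⟩
    have : j' ≠ j := by rintro rfl; exact hj hj'
    simp [coproj, this]
  · intro hξ
    have hsum : ξ = ∑ j, ξ (Pi.single j 1) • coproj j := by
      ext v
      conv_lhs => rw [pi_eq_sum_univ' v]
      simp [coproj, mul_comm]
    rw [hsum]
    refine Submodule.sum_mem _ fun j _ => ?_
    by_cases hj : p j
    · exact Submodule.smul_mem _ _ (Submodule.subset_span ⟨j, hj, rfl⟩)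
    · simp [hξ j hj]

lemma forall_mem_span_single_apply_eq_zero_iff (p : Fin n → Prop) (ξ : Covector n) :
    (∀ v ∈ Submodule.span ℝ { w : Fin n → ℝ | ∃ j, p j ∧ w = Pi.single j (1 : ℝ) }, ξ v = 0) ↔
      ∀ j, p j → ξ (Pi.single j 1) = 0 := by
  refine (Submodule.span_le (p := LinearMap.ker (ξ : (Fin n → ℝ) →ₗ[ℝ] ℝ))).trans ?_
  exact ⟨fun h j hj => h ⟨j, hj, rfl⟩, by rintro h _ ⟨j, hj, rfl⟩; exact h j hj⟩

lemma lam_apply_apply {i : ℕ} (hi : i + 1 < n) (q v : Fin n → ℝ) :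
    lam n i q v = v ⟨i, by omega⟩ - q ⟨i + 1, hi⟩ * v ⟨n - 1, by omega⟩ := by
  simp [lam, hi, coproj]

lemma hasFDerivAt_lam {i : ℕ} (hi : i + 1 < n) (q : Fin n → ℝ) :
    HasFDerivAt (lam n i)
      (-(ContinuousLinearMap.proj ⟨i + 1, hi⟩ : (Fin n → ℝ) →L[ℝ] ℝ).smulRight
        (coproj ⟨n - 1, by omega⟩)) q := by
  have hlam : lam n i =
      fun q => coproj ⟨i, by omega⟩ - q ⟨i + 1, hi⟩ • coproj ⟨n - 1, by omega⟩ := by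
    funext q
    rw [lam, dif_pos hi]
  rw [hlam]
  exact ((hasFDerivAt_const (coproj ⟨i, by omega⟩ : Covector n) q).sub
    ((ContinuousLinearMap.proj (R := ℝ) ⟨i + 1, hi⟩).hasFDerivAt.smul_const
      (coproj ⟨n - 1, by omega⟩ : Covector n))).congr_fderiv (zero_sub _)

lemma intExtDer_lam {i : ℕ} (hi : i + 1 < n) (q v : Fin n → ℝ) :
    intExtDer (lam n i) q v =
      v ⟨n - 1, by omega⟩ • coproj ⟨i + 1, hi⟩ - v ⟨i + 1, hi⟩ • coproj ⟨n - 1, by omega⟩ := by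
  ext w
  simp [intExtDer, (hasFDerivAt_lam hi q).fderiv, coproj]
  ring

def lamKernelVec (q : Fin n → ℝ) : Fin n → ℝ :=
  fun j => if h : j.1 + 1 < n then q ⟨j.1 + 1, h⟩ else 1

lemma lam_apply_lamKernelVec (i : ℕ) (q : Fin n → ℝ) : lam n i q (lamKernelVec q) = 0 := by
  by_cases hi : i + 1 < n
  · simp [lam_apply_apply hi, lamKernelVec, hi, show ¬ n - 1 + 1 < n by omega]
  · simp [lam, hi]

variable {k : ℕ} {q : Fin n → ℝ}

lemma apply_eq_zero_of_mem_lamSpanPt {u : Fin n → ℝ}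
    (hu : ∀ i, i + k + 3 ≤ n → lam n i q u = 0) {ξ : Covector n} (hξ : ξ ∈ lamSpanPt n k q) :
    ξ u = 0 := by
  refine Submodule.span_le (p := LinearMap.ker
    ((ContinuousLinearMap.apply ℝ ℝ u : Covector n →L[ℝ] ℝ) : Covector n →ₗ[ℝ] ℝ)).2 ?_ hξ
  rintro _ ⟨i, hi, rfl⟩
  exact hu i hi

lemma mem_assocPt_iff (hk : k + 3 ≤ n) {v : Fin n → ℝ} :
    v ∈ assocPt n k q ↔ ∀ j : Fin n, j.1 + k + 2 ≤ n ∨ j.1 + 1 = n → v j = 0 := by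
  constructor
  · intro hv
    obtain ⟨-, hι⟩ := hv (n - k - 3) (by omega)
    rw [intExtDer_lam (by omega)] at hι
    have hlast : v ⟨n - 1, by omega⟩ = 0 := by
      have := apply_eq_zero_of_mem_lamSpanPt (u := Pi.single ⟨n - k - 3 + 1, by omega⟩ 1)
        (fun i hi => by
          simp [lam_apply_apply (show i + 1 < n by omega),
            show i ≠ n - k - 3 + 1 by omega, show n ≠ n - k - 3 + 2 by omega]) hι
      simpa [coproj, Pi.single_apply, Fin.ext_iff, show n - 1 ≠ n - k - 3 + 1 by omega] using this
    have hmid : v ⟨n - k - 3 + 1, by omega⟩ = 0 := by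
      have := apply_eq_zero_of_mem_lamSpanPt (fun i _ => lam_apply_lamKernelVec i q) hι
      simpa [coproj, lamKernelVec, hlast, show ¬ n - 1 + 1 < n by omega] using this
    rintro j (hj | hj)
    · by_cases hjs : j.1 + k + 3 ≤ n
      · simpa [lam_apply_apply (show j.1 + 1 < n by omega), hlast] using (hv j hjs).1
      · rwa [show j = ⟨n - k - 3 + 1, by omega⟩ from Fin.ext (by simp only; omega)]
    · rwa [show j = ⟨n - 1, by omega⟩ from Fin.ext (by simp only; omega)]
  · intro hv i hi
    have hvi : v ⟨i, by omega⟩ = 0 := hv _ (Or.inl (by simp only; omega))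
    have hvi' : v ⟨i + 1, by omega⟩ = 0 := hv _ (Or.inl (by simp only; omega))
    have hlast : v ⟨n - 1, by omega⟩ = 0 := hv _ (Or.inr (by simp only; omega))
    refine ⟨by simp [lam_apply_apply (show i + 1 < n by omega), hvi, hlast], ?_⟩
    rw [intExtDer_lam (by omega), hvi', hlast, zero_smul, zero_smul, sub_zero]
    exact zero_mem _

end

theorem assoc_retract_spaces_general (n k : ℕ) (hk2 : k + 3 ≤ n)
    (q : Fin n → ℝ) :
    assocPt n k q =
      ↑(Submodule.span ℝ { w : Fin n → ℝ |
          ∃ j : Fin n, n ≤ j.1 + k + 1 ∧ j.1 + 2 ≤ n ∧ w = Pi.single j (1 : ℝ) }) ∧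
    retractPt n k q =
      ↑(Submodule.span ℝ { ξ : Covector n |
          ∃ j : Fin n, (j.1 + k + 2 ≤ n ∨ j.1 + 1 = n) ∧ ξ = coproj j }) ∧
    ∀ i : ℕ, i + k + 3 ≤ n →
      lam n i q ∈ Submodule.span ℝ { ξ : Covector n |
          ∃ j : Fin n, (j.1 + k + 2 ≤ n ∨ j.1 + 1 = n) ∧ ξ = coproj j } := by
  have hA : assocPt n k q = ↑(Submodule.span ℝ { w : Fin n → ℝ |
      ∃ j : Fin n, (n ≤ j.1 + k + 1 ∧ j.1 + 2 ≤ n) ∧ w = Pi.single j (1 : ℝ) }) := by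
    ext v
    rw [mem_assocPt_iff hk2, SetLike.mem_coe, mem_span_single_iff]
    exact forall_congr' fun j => imp_congr_left (by omega)
  have hC : retractPt n k q = ↑(Submodule.span ℝ { ξ : Covector n |
      ∃ j : Fin n, (j.1 + k + 2 ≤ n ∨ j.1 + 1 = n) ∧ ξ = coproj j }) := by
    ext ξ
    simp only [retractPt, hA, SetLike.mem_coe, Set.mem_ofPred_eq]
    rw [forall_mem_span_single_apply_eq_zero_iff, mem_span_coproj_iff]
    exact forall_congr' fun j => imp_congr_left (by omega)
  refine ⟨by simpa only [and_assoc] using hA, hC, fun i hi => ?_⟩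
  have hlam : lam n i q ∈ retractPt n k q := fun v hv => (hv i hi).1
  rwa [hC] at hlam

/-- For `n ≥ 4`, `1 ≤ k ≤ n−3` and every `q ∈ ℝⁿ`:
`A(Λᵏ)_q = span_ℝ{e_{n−k}, …, e_{n−1}}` (1-based indices; 0-based `n−1−k, …, n−2`) and
`C(Λᵏ)_q = span_ℝ{e₁*, …, e_{n−1−k}*, eₙ*}`, which contains each `λⁱ(q)`. -/
theorem assoc_retract_spaces (n k : ℕ) (hn : 4 ≤ n) (hk1 : 1 ≤ k) (hk2 : k + 3 ≤ n)
    (q : Fin n → ℝ) :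
    assocPt n k q =
      ↑(Submodule.span ℝ { w : Fin n → ℝ |
          ∃ j : Fin n, n ≤ j.1 + k + 1 ∧ j.1 + 2 ≤ n ∧ w = Pi.single j (1 : ℝ) }) ∧
    retractPt n k q =
      ↑(Submodule.span ℝ { ξ : Covector n |
          ∃ j : Fin n, (j.1 + k + 2 ≤ n ∨ j.1 + 1 = n) ∧ ξ = coproj j }) ∧
    ∀ i : ℕ, i + k + 3 ≤ n →
      lam n i q ∈ Submodule.span ℝ { ξ : Covector n |
          ∃ j : Fin n, (j.1 + k + 2 ≤ n ∨ j.1 + 1 = n) ∧ ξ = coproj j } :=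
  assoc_retract_spaces_general n k hk2 q

end
end
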